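/- arXiv:1201.4941 — 2 statements merged into one kernel-verified Lean document; each statement's English description precedes it below -/
import Mathlib

section
/- For any positive integers a and b, ∑_{k≥0} [a+b choose k]_q · A_{k,a-1}(q) = ∑_{k≥0} [a+b choose k]_q · A_{k,b-1}(q), where [n choose k]_q is the q-binomial coefficient and A_{n,k}(q) are the q-Eulerian numbers. -/
/-!
Extracting the coefficient of `z ^ n` from
`(e(tz) - t e(z)) · ∑ A_n z ^ n / (q;q)_n = e(z) - e(tz)` gives the recurrence
`∑_k [n choose k]_q (t ^ (n - k) - t) A_k = 1 - t ^ n`. This recurrence alone forces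
`deg A_n < n` and the palindromy `t ^ (n - 1) A_n(1/t) = A_n(t)`: reflecting the recurrence
in degree `n + 1` turns it into `-t` times itself. For `n = a + b` the coefficient of `t ^ a`
in the recurrence reads `∑_k [n choose k]_q ([t ^ (k - b)] A_k - [t ^ (a - 1)] A_k) = 0`,
and palindromy turns `[t ^ (k - b)] A_k` into `[t ^ (b - 1)] A_k`.
-/

open Polynomial PowerSeries

/-- The variable `q` in the field `ℚ(q)` of rational functions. -/
noncomputable def qq : RatFunc ℚ := RatFunc.X

/-- The q-shifted factorial `(q;q)_n = ∏_{i=1}^n (1 - q^i)`. -/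
noncomputable def qfac (n : ℕ) : RatFunc ℚ := ∏ i ∈ Finset.range n, (1 - qq ^ (i + 1))

/-- The q-exponential `e(z;q) = ∑ z^n/(q;q)_n`, as a power series in `z` over `ℚ(q)[t]`. -/
noncomputable def qexpZ : PowerSeries (Polynomial (RatFunc ℚ)) :=
  PowerSeries.mk fun n => Polynomial.C (qfac n)⁻¹

/-- `e(tz;q) = ∑ t^n z^n/(q;q)_n`, as a power series in `z` over `ℚ(q)[t]`. -/
noncomputable def qexpTZ : PowerSeries (Polynomial (RatFunc ℚ)) :=
  PowerSeries.mk fun n => Polynomial.X ^ n * Polynomial.C (qfac n)⁻¹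

/-- The q-binomial coefficient `[n choose k]_q ∈ ℚ(q)`. -/
noncomputable def qbinom (n k : ℕ) : RatFunc ℚ :=
  if k ≤ n then qfac n / (qfac (n - k) * qfac k) else 0

namespace Polynomial

variable {R : Type*}

theorem reflect_sum [Semiring R] {ι : Type*} (N : ℕ) (s : Finset ι) (f : ι → R[X]) :
    reflect N (∑ i ∈ s, f i) = ∑ i ∈ s, reflect N (f i) := by
  ext j
  simp only [coeff_reflect, finsetSum_coeff]

theorem reflect_X_pow_sub_X [Ring R] (m : ℕ) :
    reflect (m + 1) ((X : R[X]) ^ m - X) = X - X ^ m := by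
  have hX : reflect (m + 1) (X : R[X]) = X ^ m := by
    simpa [revAt_le] using reflect_monomial (R := R) (m + 1) 1
  rw [reflect_sub, reflect_monomial, hX, revAt_le (by omega), Nat.add_sub_cancel_left, pow_one]

theorem coeff_X_pow_mul_of_reflect_eq_X_mul [Semiring R] {p : R[X]} {k m a b : ℕ}
    (hdeg : p.degree < (k : WithBot ℕ)) (hp : reflect k p = X * p) (hb : 0 < b)
    (h : m + k = a + b) : (X ^ m * p).coeff a = p.coeff (b - 1) := by
  rw [coeff_X_pow_mul']
  split_ifs with hm
  · have hcoeff := congrArg (coeff · (a - m + 1)) hp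
    simp only [coeff_reflect, coeff_X_mul] at hcoeff
    rwa [revAt_le (by omega), show k - (a - m + 1) = b - 1 by omega, eq_comm] at hcoeff
  · refine (coeff_eq_zero_of_degree_lt (hdeg.trans_le ?_)).symm
    exact_mod_cast (by omega : k ≤ b - 1)

theorem degree_lt_of_degree_one_sub_X_mul_le [CommRing R] [IsDomain R] {p : R[X]} {n : ℕ}
    (h : ((1 - X) * p).degree ≤ (n : WithBot ℕ)) : p.degree < (n : WithBot ℕ) := by
  have h1 : (1 - X : R[X]).degree = 1 := by compute_degree!
  rcases eq_or_ne p 0 with rfl | hp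
  · exact WithBot.bot_lt_coe n
  rw [degree_mul, h1, degree_eq_natDegree hp] at h
  rw [degree_eq_natDegree hp]
  have : 1 + p.natDegree ≤ n := by exact_mod_cast h
  exact_mod_cast (by omega : p.natDegree < n)

variable [CommRing R] {c : ℕ → ℕ → R} {A : ℕ → R[X]}

def SatisfiesEulerianRecurrence (c : ℕ → ℕ → R) (A : ℕ → R[X]) : Prop :=
  ∀ n, ∑ k ∈ Finset.range (n + 1), C (c n k) * (X ^ (n - k) - X) * A k = 1 - X ^ n

namespace SatisfiesEulerianRecurrence

theorem one_sub_X_mul_eq (hA : SatisfiesEulerianRecurrence c A) (hc : ∀ n, c n n = 1)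
    (n : ℕ) :
    (1 - X) * A n = 1 - X ^ n - ∑ k ∈ Finset.range n, C (c n k) * (X ^ (n - k) - X) * A k := by
  have h := hA n
  rw [Finset.sum_range_succ, hc, Nat.sub_self, pow_zero, C_1, one_mul] at h
  linear_combination h

theorem degree_lt [IsDomain R] (hA : SatisfiesEulerianRecurrence c A)
    (hc : ∀ n, c n n = 1) (n : ℕ) : (A n).degree < (n : WithBot ℕ) := by
  induction n using Nat.strong_induction_on with
  | _ n ih =>
  have hterm : ∀ k ∈ Finset.range n,
      (C (c n k) * (X ^ (n - k) - X) * A k).degree ≤ (n : WithBot ℕ) := by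
    intro k hk
    have hk : k < n := Finset.mem_range.mp hk
    have hfactor : (C (c n k) * (X ^ (n - k) - X)).degree ≤ ↑(n - k) := by
      compute_degree
      exact max_le le_rfl (by exact_mod_cast (by omega : 1 ≤ n - k))
    calc (C (c n k) * (X ^ (n - k) - X) * A k).degree
        ≤ ↑(n - k) + ↑k := (degree_mul_le _ _).trans (add_le_add hfactor (ih k hk).le)
      _ = (n : WithBot ℕ) := by norm_cast; omega
  refine degree_lt_of_degree_one_sub_X_mul_le ?_
  rw [hA.one_sub_X_mul_eq hc]
  refine (degree_sub_le _ _).trans (max_le ((degree_sub_le _ _).trans (max_le ?_ ?_)) ?_)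
  · exact degree_one_le.trans Nat.WithBot.coe_nonneg
  · exact degree_X_pow_le n
  · exact (degree_sum_le _ _).trans (Finset.sup_le hterm)

-- The palindromy `t ^ (n - 1) A_n(1/t) = A_n(t)`, in a form that also holds for `n = 0`.
theorem reflect_eq_X_mul [IsDomain R] (hA : SatisfiesEulerianRecurrence c A)
    (hc : ∀ n, c n n = 1) (n : ℕ) : reflect n (A n) = X * A n := by
  induction n using Nat.strong_induction_on with
  | _ n ih =>
  have hdeg (k : ℕ) : (A k).natDegree ≤ k :=
    natDegree_le_of_degree_le (hA.degree_lt hc k).le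
  have hterm : ∀ k ∈ Finset.range n, reflect (n + 1) (C (c n k) * (X ^ (n - k) - X) * A k) =
      -(X * (C (c n k) * (X ^ (n - k) - X) * A k)) := by
    intro k hk
    have hk : k < n := Finset.mem_range.mp hk
    have hfactor : (C (c n k) * (X ^ (n - k) - X)).natDegree ≤ n - k + 1 := by
      compute_degree
      omega
    rw [show n + 1 = n - k + 1 + k by omega, reflect_mul _ _ hfactor (hdeg k), reflect_C_mul,
      reflect_X_pow_sub_X, ih k hk]
    ring
  have hleft : reflect (n + 1) ((1 - X) * A n) = (X - 1) * reflect n (A n) := by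
    have h1 : (1 - X : R[X]).natDegree ≤ 1 := by compute_degree
    rw [add_comm, reflect_mul _ _ h1 (hdeg n), reflect_sub, reflect_one, reflect_one_X, pow_one]
  have h := congrArg (reflect (n + 1)) (hA.one_sub_X_mul_eq hc n)
  rw [hleft, reflect_sub, reflect_sub, reflect_one, reflect_monomial, revAt_le (by omega),
    Nat.add_sub_cancel_left, pow_one, reflect_sum, Finset.sum_congr rfl hterm,
    Finset.sum_neg_distrib, ← Finset.mul_sum] at h
  refine mul_left_cancel₀ (X_sub_C_ne_zero (1 : R)) ?_
  rw [C_1]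
  linear_combination h + X * hA.one_sub_X_mul_eq hc n

theorem sum_mul_coeff_sub_one_comm [IsDomain R] (hA : SatisfiesEulerianRecurrence c A)
    (hc : ∀ n, c n n = 1) {a b : ℕ} (ha : 0 < a) (hb : 0 < b) :
    ∑ k ∈ Finset.range (a + b + 1), c (a + b) k * (A k).coeff (a - 1) =
      ∑ k ∈ Finset.range (a + b + 1), c (a + b) k * (A k).coeff (b - 1) := by
  have hterm : ∀ k ∈ Finset.range (a + b + 1),
      (C (c (a + b) k) * (X ^ (a + b - k) - X) * A k).coeff a =
        c (a + b) k * (A k).coeff (b - 1) - c (a + b) k * (A k).coeff (a - 1) := by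
    intro k hk
    have hk : k ≤ a + b := Nat.lt_succ_iff.mp (Finset.mem_range.mp hk)
    rw [mul_assoc, coeff_C_mul, sub_mul, coeff_sub, mul_sub,
      coeff_X_pow_mul_of_reflect_eq_X_mul (hA.degree_lt hc k)
        (hA.reflect_eq_X_mul hc k) hb (by omega),
      ← coeff_X_mul _ (a - 1), Nat.sub_add_cancel ha]
  have h := congrArg (coeff · a) (hA (a + b))
  simp only [finsetSum_coeff, Finset.sum_congr rfl hterm, Finset.sum_sub_distrib, coeff_sub,
    coeff_one, coeff_X_pow, ha.ne', if_false, if_neg (by omega : a ≠ a + b)] at h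
  linear_combination -h

end SatisfiesEulerianRecurrence

end Polynomial

@[simp]
theorem qfac_zero : qfac 0 = 1 :=
  Finset.prod_range_zero _

theorem qfac_ne_zero (n : ℕ) : qfac n ≠ 0 := by
  refine Finset.prod_ne_zero_iff.mpr fun i _ => ?_
  rw [qq, sub_ne_zero, ne_comm, ← RatFunc.algebraMap_X, ← map_pow,
    ← map_one (algebraMap ℚ[X] (RatFunc ℚ)), Ne,
    (IsFractionRing.injective ℚ[X] (RatFunc ℚ)).eq_iff]
  exact fun h => by simpa using congrArg natDegree h

theorem qbinom_self (n : ℕ) : qbinom n n = 1 := by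
  simp [qbinom, qfac_ne_zero]

theorem qEulerian_recurrence (A : ℕ → Polynomial (RatFunc ℚ))
    (hA : (qexpTZ - PowerSeries.C (R := Polynomial (RatFunc ℚ)) Polynomial.X * qexpZ) *
        PowerSeries.mk (fun n => A n * Polynomial.C (qfac n)⁻¹) = qexpZ - qexpTZ) :
    Polynomial.SatisfiesEulerianRecurrence qbinom A := by
  intro n
  have h := congrArg (PowerSeries.coeff n) hA
  rw [mul_comm, PowerSeries.coeff_mul, Finset.Nat.sum_antidiagonal_eq_sum_range_succ
    (fun i j => PowerSeries.coeff i _ * PowerSeries.coeff j _)] at h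
  simp only [qexpZ, qexpTZ, map_sub, PowerSeries.coeff_C_mul, PowerSeries.coeff_mk] at h
  have hinv : Polynomial.C (qfac n) * Polynomial.C (qfac n)⁻¹ = 1 := by
    rw [← Polynomial.C_mul, mul_inv_cancel₀ (qfac_ne_zero n), Polynomial.C_1]
  calc ∑ k ∈ Finset.range (n + 1),
        Polynomial.C (qbinom n k) * (Polynomial.X ^ (n - k) - Polynomial.X) * A k
      = Polynomial.C (qfac n) * ∑ k ∈ Finset.range (n + 1), A k * Polynomial.C (qfac k)⁻¹ *
          (Polynomial.X ^ (n - k) * Polynomial.C (qfac (n - k))⁻¹ -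
            Polynomial.X * Polynomial.C (qfac (n - k))⁻¹) := by
        rw [Finset.mul_sum]
        refine Finset.sum_congr rfl fun k hk => ?_
        rw [qbinom, if_pos (Nat.lt_succ_iff.mp (Finset.mem_range.mp hk)), div_eq_mul_inv, mul_inv]
        simp only [Polynomial.C_mul]
        ring
    _ = 1 - Polynomial.X ^ n := by
        rw [h]
        linear_combination (1 - Polynomial.X ^ n) * hinv

/-- The symmetrical q-Eulerian identity
`∑_{k≥0} [a+b choose k]_q A_{k,a-1}(q) = ∑_{k≥0} [a+b choose k]_q A_{k,b-1}(q)`,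
where `A_{k,j}(q)` is the coefficient of `t^j` in the q-Eulerian polynomial `A k`.
(The q-binomial vanishes for `k > a+b`, so the sum over `k ≥ 0` reduces to
`0 ≤ k ≤ a+b`.) -/
theorem symmetrical_qEulerian_identity (A : ℕ → Polynomial (RatFunc ℚ))
    (hA : (qexpTZ - PowerSeries.C (R := Polynomial (RatFunc ℚ)) Polynomial.X * qexpZ) *
        PowerSeries.mk (fun n => A n * Polynomial.C (qfac n)⁻¹) = qexpZ - qexpTZ)
    (a b : ℕ) (ha : 0 < a) (hb : 0 < b) :
    ∑ k ∈ Finset.range (a + b + 1), qbinom (a + b) k * (A k).coeff (a - 1) =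
    ∑ k ∈ Finset.range (a + b + 1), qbinom (a + b) k * (A k).coeff (b - 1) := by
  exact (qEulerian_recurrence A hA).sum_mul_coeff_sub_one_comm qbinom_self ha hb
end

section
/- There exists an involution π ↦ σ on the symmetric group S_n such that lec(π) = n − 1 − lec(σ) and inv(π) − lec(π) = inv(σ) − lec(σ), for every n ≥ 1. -/
/-- An increasing word (possibly empty). -/
def IsIncr (w : List ℕ) : Prop := w.Chain' (· < ·)

/-- A hook: a word `x₁x₂⋯x_m` of distinct letters with `x₁ > x₂` and
`x₂ < x₃ < ⋯ < x_m` (in particular `m ≥ 2`). -/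
def IsHook (w : List ℕ) : Prop :=
  w.Nodup ∧ ∃ x y rest, w = x :: y :: rest ∧ y < x ∧ (y :: rest).Chain' (· < ·)

/-- The number of inversions of a word: pairs of positions `i < j` with `w_i > w_j`. -/
def invList : List ℕ → ℕ
  | [] => 0
  | x :: xs => xs.countP (fun y => decide (y < x)) + invList xs

open Classical in
/-- The hook factorization of a word (chosen via choice; it exists and is unique
for permutation words). -/
noncomputable def hookFact (w : List ℕ) : List ℕ × List (List ℕ) :=
  if h : ∃ pt : List ℕ × List (List ℕ),
      IsIncr pt.1 ∧ (∀ τ ∈ pt.2, IsHook τ) ∧ pt.1 ++ pt.2.flatten = w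
  then h.choose else ([], [])

/-- `lec(w)`: the sum of the inversion numbers of the hooks in the hook
factorization of `w`. -/
noncomputable def lec (w : List ℕ) : ℕ := ((hookFact w).2.map invList).sum

/-!
Encode a permutation through its hook factorization `p τ₁ ⋯ τᵣ` by a list of blocks `(s, j)`:
the blocks are `p` (if nonempty) and the hooks, `s` is the block sorted increasingly and `j`
its number of inversions, so that the block is `s` with its `(j + 1)`-st smallest letter moved
to the front. Every block has `j < |s|`, and only the first one can have `j = 0`. Then `lec` is
the sum of the `j`'s, while `inv - lec` is the inversion number of the concatenation of the
sorted blocks, which depends on the `s`'s only. Replacing `j` by `|s| - 1 - j` in the first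
block and by `|s| - j` in the others is an involution on such codes that keeps the `s`'s and
turns `∑ j` into `n - 1 - ∑ j`.
-/

lemma invList_append (a b : List ℕ) :
    invList (a ++ b) = invList a + invList b + (a.map fun x => b.countP (· < x)).sum := by
  induction a with
  | nil => simp [invList]
  | cons x a ih =>
    simp only [List.cons_append, invList, ih, List.countP_append, List.map_cons, List.sum_cons]
    ring

lemma invList_eq_zero_of_pairwise {l : List ℕ} (h : l.Pairwise (· < ·)) : invList l = 0 := by
  induction l with
  | nil => rfl
  | cons x l ih =>
    rw [List.pairwise_cons] at h
    simp only [invList, ih h.2, add_zero, List.countP_eq_zero, decide_eq_true_eq]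
    exact fun y hy => (h.1 y hy).not_gt

/-- Cross inversions between consecutive blocks only depend on the blocks' contents. -/
lemma invList_flatMap_add_sum {α : Type*} (L : List α) {f g : α → List ℕ}
    (h : ∀ a ∈ L, (f a).Perm (g a)) :
    invList (L.flatMap f) + (L.map (invList ∘ g)).sum =
      invList (L.flatMap g) + (L.map (invList ∘ f)).sum := by
  induction L with
  | nil => rfl
  | cons a L ih =>
    have hL : ∀ b ∈ L, (f b).Perm (g b) := fun b hb => h b (List.mem_cons_of_mem a hb)
    have hcross : ((f a).map fun x => (L.flatMap f).countP (· < x)).sum =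
        ((g a).map fun x => (L.flatMap g).countP (· < x)).sum := by
      rw [((h a List.mem_cons_self).map _).sum_eq]
      congr 1
      exact List.map_congr_left fun x _ => ((List.Perm.flatMap_left L hL).countP_eq _)
    simp only [List.flatMap_cons, invList_append, List.map_cons, List.sum_cons,
      Function.comp_apply] at ih ⊢
    have := ih hL
    omega

/-- Moves the letter of index `j` (counting from `0`) to the front. -/
def hookOf (s : List ℕ) (j : ℕ) : List ℕ :=
  match s.drop j with
  | [] => s
  | x :: r => x :: (s.take j ++ r)

lemma hookOf_zero (s : List ℕ) : hookOf s 0 = s := by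
  cases s <;> rfl

lemma hookOf_append_cons (a c : List ℕ) (x : ℕ) :
    hookOf (a ++ x :: c) a.length = x :: (a ++ c) := by
  simp [hookOf]

lemma exists_eq_append_cons_of_lt_length {s : List ℕ} {j : ℕ} (h : j < s.length) :
    ∃ a x c, s = a ++ x :: c ∧ a.length = j :=
  ⟨s.take j, s[j], s.drop (j + 1), by rw [← List.drop_eq_getElem_cons h, List.take_append_drop],
    by simp; omega⟩

section hookOf

variable {s : List ℕ} {j : ℕ}

lemma hookOf_perm (hj : j < s.length) : (hookOf s j).Perm s := by
  obtain ⟨a, x, c, rfl, rfl⟩ := exists_eq_append_cons_of_lt_length hj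
  rw [hookOf_append_cons]
  exact List.perm_middle.symm

lemma invList_hookOf (hs : s.Pairwise (· < ·)) (hj : j < s.length) :
    invList (hookOf s j) = j := by
  obtain ⟨a, x, c, rfl, rfl⟩ := exists_eq_append_cons_of_lt_length hj
  obtain ⟨-, hxc, hax⟩ := List.pairwise_append.1 hs
  have hac : (a ++ c).Pairwise (· < ·) := hs.sublist (by simp)
  have hbelow : a.countP (· < x) = a.length :=
    List.countP_eq_length.2 fun y hy => by simpa using hax y hy x List.mem_cons_self
  have habove : c.countP (· < x) = 0 :=
    List.countP_eq_zero.2 fun y hy => by simpa using (List.rel_of_pairwise_cons hxc hy).le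
  rw [hookOf_append_cons, invList, invList_eq_zero_of_pairwise hac, List.countP_append, hbelow,
    habove, add_zero, add_zero]

lemma insertionSort_eq_of_perm {l s : List ℕ} (h : l.Perm s) (hs : s.Pairwise (· < ·)) :
    l.insertionSort (· ≤ ·) = s :=
  ((List.perm_insertionSort _ l).trans h).eq_of_pairwise' (List.pairwise_insertionSort _ l)
    (hs.imp le_of_lt)

lemma isHook_hookOf (hs : s.Pairwise (· < ·)) (hj : j < s.length) (hj₁ : 1 ≤ j) :
    IsHook (hookOf s j) := by
  refine ⟨(hookOf_perm hj).nodup_iff.2 hs.nodup, ?_⟩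
  obtain ⟨a, x, c, rfl, rfl⟩ := exists_eq_append_cons_of_lt_length hj
  obtain ⟨y, a, rfl⟩ := List.exists_cons_of_length_pos hj₁
  obtain ⟨-, -, hax⟩ := List.pairwise_append.1 hs
  refine ⟨x, y, a ++ c, hookOf_append_cons .., hax y List.mem_cons_self x List.mem_cons_self, ?_⟩
  exact List.isChain_iff_pairwise.2 (hs.sublist (by simp))

end hookOf

lemma exists_hookOf_eq_cons {x : ℕ} {r : List ℕ} (hr : r.Pairwise (· < ·)) (hx : x ∉ r) :
    ∃ s j, s.Pairwise (· < ·) ∧ j < s.length ∧ hookOf s j = x :: r := by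
  set s := (x :: r).insertionSort (· ≤ ·)
  have hperm : s.Perm (x :: r) := List.perm_insertionSort _ _
  have hs : s.Pairwise (· < ·) :=
    (List.sortedLE_insertionSort.sortedLT_of_nodup
      (hperm.nodup_iff.2 (List.nodup_cons.2 ⟨hx, hr.nodup⟩))).pairwise
  obtain ⟨a, c, hac⟩ := List.append_of_mem (hperm.mem_iff.2 List.mem_cons_self)
  have hr' : a ++ c = r := by
    refine List.Perm.eq_of_pairwise' ((hac ▸ hs).sublist (by simp)) hr ?_
    rw [← List.perm_cons x]
    exact List.perm_middle.symm.trans (hac ▸ hperm)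
  refine ⟨s, a.length, hs, by simp [hac], by rw [hac, hookOf_append_cons, hr']⟩

def hookFactStep (x : ℕ) : List ℕ × List (List ℕ) → List ℕ × List (List ℕ)
  | ([], ts) => ([x], ts)
  | (y :: p, ts) => if y < x then ([], (x :: y :: p) :: ts) else (x :: y :: p, ts)

/-- The hook factorization read from right to left: each descent closes a hook. -/
def hookFactRec (w : List ℕ) : List ℕ × List (List ℕ) := w.foldr hookFactStep ([], [])

lemma hookFactRec_cons (x : ℕ) (w : List ℕ) :
    hookFactRec (x :: w) = hookFactStep x (hookFactRec w) := rfl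

lemma hookFactRec_append_of_isIncr {p u : List ℕ} {ts : List (List ℕ)} (hp : IsIncr p)
    (hu : hookFactRec u = ([], ts)) : hookFactRec (p ++ u) = (p, ts) := by
  induction p with
  | nil => exact hu
  | cons x p ih =>
    rw [List.cons_append, hookFactRec_cons, ih hp.tail]
    cases p with
    | nil => rfl
    | cons y p => simp [hookFactStep, (List.isChain_cons_cons.1 hp).1.not_gt]

lemma hookFactRec_append_flatten {p : List ℕ} {ts : List (List ℕ)} (hp : IsIncr p)
    (hts : ∀ τ ∈ ts, IsHook τ) : hookFactRec (p ++ ts.flatten) = (p, ts) := by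
  induction ts generalizing p with
  | nil => exact hookFactRec_append_of_isIncr hp rfl
  | cons τ ts ih =>
    obtain ⟨-, x, y, r, rfl, hyx, hyr⟩ := hts τ List.mem_cons_self
    refine hookFactRec_append_of_isIncr hp ?_
    have hrest := ih hyr fun σ hσ => hts σ (List.mem_cons_of_mem _ hσ)
    simp only [List.flatten_cons, List.cons_append] at hrest ⊢
    rw [hookFactRec_cons, hrest]
    simp [hookFactStep, hyx]

def IsHookFactorization (w : List ℕ) (pt : List ℕ × List (List ℕ)) : Prop :=
  IsIncr pt.1 ∧ (∀ τ ∈ pt.2, IsHook τ) ∧ pt.1 ++ pt.2.flatten = w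

def hookBlocks (pt : List ℕ × List (List ℕ)) : List (List ℕ) :=
  if pt.1 = [] then pt.2 else pt.1 :: pt.2

namespace IsHookFactorization

variable {w : List ℕ} {pt : List ℕ × List (List ℕ)}

lemma hookFactRec_eq (h : IsHookFactorization w pt) : hookFactRec w = pt :=
  h.2.2 ▸ hookFactRec_append_flatten h.1 h.2.1

lemma hookFact_eq (h : IsHookFactorization w pt) : hookFact w = pt := by
  have hex : ∃ pt : List ℕ × List (List ℕ),
      IsIncr pt.1 ∧ (∀ τ ∈ pt.2, IsHook τ) ∧ pt.1 ++ pt.2.flatten = w := ⟨pt, h⟩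
  rw [hookFact, dif_pos hex, ← h.hookFactRec_eq, hookFactRec_eq hex.choose_spec]

lemma flatten_hookBlocks (h : IsHookFactorization w pt) : (hookBlocks pt).flatten = w := by
  rw [← h.2.2, hookBlocks]
  split_ifs with hp <;> simp [hp]

lemma sum_invList_hookBlocks (h : IsHookFactorization w pt) :
    ((hookBlocks pt).map invList).sum = (pt.2.map invList).sum := by
  rw [hookBlocks]
  split_ifs
  · rfl
  · simp [invList_eq_zero_of_pairwise (List.isChain_iff_pairwise.1 h.1)]

lemma exists_hookOf_eq (h : IsHookFactorization w pt) {b : List ℕ} (hb : b ∈ hookBlocks pt) :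
    ∃ s j, s.Pairwise (· < ·) ∧ j < s.length ∧ hookOf s j = b := by
  have of_hook : ∀ τ ∈ pt.2, ∃ s j, s.Pairwise (· < ·) ∧ j < s.length ∧ hookOf s j = τ := by
    intro τ hτ
    obtain ⟨hnd, x, y, r, rfl, -, hyr⟩ := h.2.1 τ hτ
    exact exists_hookOf_eq_cons (List.isChain_iff_pairwise.1 hyr) (List.nodup_cons.1 hnd).1
  unfold hookBlocks at hb
  split_ifs at hb with hp
  · exact of_hook b hb
  rcases List.mem_cons.1 hb with rfl | hb
  · obtain ⟨x, r, hxr⟩ := List.exists_cons_of_ne_nil hp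
    have hincr := List.pairwise_cons.1 (hxr ▸ List.isChain_iff_pairwise.1 h.1)
    exact hxr ▸ exists_hookOf_eq_cons hincr.2 fun hx => lt_irrefl x (hincr.1 x hx)
  · exact of_hook b hb

lemma hookOf_insertionSort_invList (h : IsHookFactorization w pt) {b : List ℕ}
    (hb : b ∈ hookBlocks pt) :
    (b.insertionSort (· ≤ ·)).Pairwise (· < ·) ∧ invList b < (b.insertionSort (· ≤ ·)).length ∧
      hookOf (b.insertionSort (· ≤ ·)) (invList b) = b := by
  obtain ⟨s, j, hs, hj, rfl⟩ := h.exists_hookOf_eq hb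
  rw [insertionSort_eq_of_perm (hookOf_perm hj) hs, invList_hookOf hs hj]
  exact ⟨hs, hj, rfl⟩

lemma one_le_invList (h : IsHookFactorization w pt) {b : List ℕ}
    (hb : b ∈ (hookBlocks pt).tail) : 1 ≤ invList b := by
  have hτ : b ∈ pt.2 := by
    unfold hookBlocks at hb
    split_ifs at hb
    · exact List.mem_of_mem_tail hb
    · exact hb
  obtain ⟨-, x, y, r, rfl, hyx, -⟩ := h.2.1 b hτ
  rw [invList, List.countP_cons_of_pos (by simpa using hyx)]
  omega

end IsHookFactorization

lemma isHookFactorization_hookFactRec {w : List ℕ} (hw : w.Nodup) :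
    IsHookFactorization w (hookFactRec w) := by
  induction w with
  | nil => exact ⟨List.isChain_nil, by simp [hookFactRec]⟩
  | cons x w ih =>
    obtain ⟨hx, hw⟩ := List.nodup_cons.1 hw
    obtain ⟨hp, hts, hpw⟩ := ih hw
    rw [hookFactRec_cons]
    rcases hq : hookFactRec w with ⟨_ | ⟨y, p⟩, ts⟩ <;> rw [hq] at hp hts hpw
    · exact ⟨List.isChain_singleton x, hts, by simpa [hookFactStep] using hpw⟩
    by_cases hyx : y < x
    · simp only [hookFactStep, if_pos hyx]
      refine ⟨List.isChain_nil, ?_, by simpa using hpw⟩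
      simp only [List.mem_cons, forall_eq_or_imp]
      refine ⟨⟨?_, x, y, p, rfl, hyx, hp⟩, hts⟩
      exact (List.nodup_cons.2 ⟨hx, hw⟩).sublist (by rw [← hpw]; simp)
    · have hxy : x < y := lt_of_le_of_ne (not_lt.1 hyx) fun h => hx (h ▸ hpw ▸ by simp)
      simp only [hookFactStep, if_neg hyx]
      exact ⟨List.isChain_cons_cons.2 ⟨hxy, hp⟩, hts, by simpa using hpw⟩

lemma isHookFactorization_hookFact {w : List ℕ} (hw : w.Nodup) :
    IsHookFactorization w (hookFact w) := by
  rw [IsHookFactorization.hookFact_eq (isHookFactorization_hookFactRec hw)]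
  exact isHookFactorization_hookFactRec hw

/-- `(s, j)` encodes the block `hookOf s j`; only the first block may be increasing (`j = 0`). -/
def IsHookCode (E : List (List ℕ × ℕ)) : Prop :=
  (∀ e ∈ E, e.1.Pairwise (· < ·) ∧ e.2 < e.1.length) ∧ ∀ e ∈ E.tail, 1 ≤ e.2

def ofHookCode (E : List (List ℕ × ℕ)) : List ℕ := E.flatMap (Function.uncurry hookOf)

noncomputable def hookCode (w : List ℕ) : List (List ℕ × ℕ) :=
  (hookBlocks (hookFact w)).map fun b => (b.insertionSort (· ≤ ·), invList b)

lemma isHookCode_hookCode {w : List ℕ} (hw : w.Nodup) : IsHookCode (hookCode w) := by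
  refine ⟨fun e he => ?_, fun e he => ?_⟩
  · obtain ⟨b, hb, rfl⟩ := List.mem_map.1 he
    exact ((isHookFactorization_hookFact hw).hookOf_insertionSort_invList hb).imp_right And.left
  · rw [hookCode, ← List.map_tail] at he
    obtain ⟨b, hb, rfl⟩ := List.mem_map.1 he
    exact (isHookFactorization_hookFact hw).one_le_invList hb

lemma ofHookCode_hookCode {w : List ℕ} (hw : w.Nodup) : ofHookCode (hookCode w) = w := by
  calc ofHookCode (hookCode w) = (hookBlocks (hookFact w)).flatMap id := by
        rw [ofHookCode, hookCode, List.flatMap_map]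
        exact List.flatMap_congr fun b hb =>
          ((isHookFactorization_hookFact hw).hookOf_insertionSort_invList hb).2.2
    _ = w := by rw [List.flatMap_id, (isHookFactorization_hookFact hw).flatten_hookBlocks]

lemma IsHookCode.exists_isHookFactorization {E : List (List ℕ × ℕ)} (hE : IsHookCode E) :
    ∃ pt, IsHookFactorization (ofHookCode E) pt ∧
      hookBlocks pt = E.map (Function.uncurry hookOf) := by
  have hhooks : ∀ e ∈ E.tail, IsHook (hookOf e.1 e.2) := fun e he =>
    have he' := hE.1 e (List.mem_of_mem_tail he)
    isHook_hookOf he'.1 he'.2 (hE.2 e he)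
  rcases E with _ | ⟨⟨s, j⟩, E⟩
  · exact ⟨([], []), ⟨List.isChain_nil, by simp, rfl⟩, rfl⟩
  obtain ⟨hs, hj⟩ := hE.1 _ List.mem_cons_self
  rcases Nat.eq_zero_or_pos j with rfl | hj₁
  · refine ⟨(s, E.map (Function.uncurry hookOf)), ⟨List.isChain_iff_pairwise.2 hs, ?_, ?_⟩, ?_⟩
    · intro τ hτ
      obtain ⟨e, he, rfl⟩ := List.mem_map.1 hτ
      exact hhooks e he
    · simp [ofHookCode, hookOf_zero, List.flatMap_def]
    · simp [hookBlocks, hookOf_zero, List.ne_nil_of_length_pos hj]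
  · refine ⟨([], (s, j) :: E |>.map (Function.uncurry hookOf)), ⟨List.isChain_nil, ?_, ?_⟩, rfl⟩
    · intro τ hτ
      obtain ⟨e, he, rfl⟩ := List.mem_map.1 hτ
      rcases List.mem_cons.1 he with rfl | he
      · exact isHook_hookOf hs hj hj₁
      · exact hhooks e he
    · simp [ofHookCode, List.flatMap_def]

lemma IsHookCode.hookCode_ofHookCode {E : List (List ℕ × ℕ)} (hE : IsHookCode E) :
    hookCode (ofHookCode E) = E := by
  obtain ⟨pt, hpt, hblocks⟩ := hE.exists_isHookFactorization
  rw [hookCode, hpt.hookFact_eq, hblocks, List.map_map]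
  refine (List.map_congr_left fun e he => ?_).trans (List.map_id E)
  obtain ⟨hs, hj⟩ := hE.1 e he
  exact Prod.ext (insertionSort_eq_of_perm (hookOf_perm hj) hs) (invList_hookOf hs hj)

lemma IsHookCode.lec_ofHookCode {E : List (List ℕ × ℕ)} (hE : IsHookCode E) :
    lec (ofHookCode E) = (E.map Prod.snd).sum := by
  obtain ⟨pt, hpt, hblocks⟩ := hE.exists_isHookFactorization
  rw [lec, hpt.hookFact_eq, ← hpt.sum_invList_hookBlocks, hblocks, List.map_map]
  exact congrArg List.sum
    (List.map_congr_left fun e he => invList_hookOf (hE.1 e he).1 (hE.1 e he).2)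

lemma ofHookCode_perm {E : List (List ℕ × ℕ)} (hE : ∀ e ∈ E, e.2 < e.1.length) :
    (ofHookCode E).Perm (E.flatMap Prod.fst) :=
  List.Perm.flatMap_left E fun e he => hookOf_perm (hE e he)

lemma invList_ofHookCode {E : List (List ℕ × ℕ)}
    (hE : ∀ e ∈ E, e.1.Pairwise (· < ·) ∧ e.2 < e.1.length) :
    invList (ofHookCode E) = (E.map Prod.snd).sum + invList (E.flatMap Prod.fst) := by
  have h := invList_flatMap_add_sum E (f := Function.uncurry hookOf) (g := Prod.fst)
    fun e he => hookOf_perm (hE e he).2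
  have hsorted : (E.map (invList ∘ Prod.fst)).sum = 0 :=
    List.sum_eq_zero fun k hk => by
      obtain ⟨e, he, rfl⟩ := List.mem_map.1 hk
      exact invList_eq_zero_of_pairwise (hE e he).1
  have hhooks : (E.map (invList ∘ Function.uncurry hookOf)).sum = (E.map Prod.snd).sum :=
    congrArg List.sum (List.map_congr_left fun e he => invList_hookOf (hE e he).1 (hE e he).2)
  rw [ofHookCode]
  omega

def dualHookCode : List (List ℕ × ℕ) → List (List ℕ × ℕ)
  | [] => []
  | (s, j) :: E => (s, s.length - 1 - j) :: E.map fun e => (e.1, e.1.length - e.2)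

lemma flatMap_fst_dualHookCode (E : List (List ℕ × ℕ)) :
    (dualHookCode E).flatMap Prod.fst = E.flatMap Prod.fst := by
  rcases E with _ | ⟨⟨s, j⟩, E⟩ <;> simp [dualHookCode, List.flatMap_map]

namespace IsHookCode

variable {E : List (List ℕ × ℕ)}

lemma dualHookCode (hE : IsHookCode E) : IsHookCode (_root_.dualHookCode E) := by
  rcases E with _ | ⟨⟨s, j⟩, E⟩
  · exact hE
  obtain ⟨hvalid, htail⟩ := hE
  simp only [List.forall_mem_cons, List.tail_cons] at hvalid htail
  obtain ⟨⟨hs, hj⟩, hrest⟩ := hvalid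
  refine ⟨List.forall_mem_cons.2 ⟨⟨hs, by simp only; omega⟩, ?_⟩, ?_⟩ <;>
    simp only [_root_.dualHookCode, List.tail_cons, List.forall_mem_map]
  · exact fun e he => ⟨(hrest e he).1, by have := (hrest e he).2; have := htail e he; omega⟩
  · exact fun e he => by have := (hrest e he).2; omega

lemma dualHookCode_dualHookCode (hE : IsHookCode E) :
    _root_.dualHookCode (_root_.dualHookCode E) = E := by
  rcases E with _ | ⟨⟨s, j⟩, E⟩
  · rfl
  have hj := (hE.1 _ List.mem_cons_self).2
  simp only [_root_.dualHookCode, List.map_map, List.cons.injEq, Prod.mk.injEq, true_and]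
  refine ⟨by simp only at hj; omega, (List.map_congr_left fun e he => ?_).trans (List.map_id E)⟩
  have := (hE.1 e (List.mem_cons_of_mem _ he)).2
  exact Prod.ext rfl (by simp only [Function.comp_apply, id]; omega)

lemma sum_snd_add_sum_snd_dualHookCode (hE : IsHookCode E) :
    (E.map Prod.snd).sum + ((_root_.dualHookCode E).map Prod.snd).sum =
      (E.flatMap Prod.fst).length - 1 := by
  rcases E with _ | ⟨⟨s, j⟩, E⟩
  · rfl
  have hj := (hE.1 _ List.mem_cons_self).2
  have hrest : (E.map Prod.snd).sum + (E.map fun e => e.1.length - e.2).sum =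
      (E.map fun e => e.1.length).sum := by
    rw [← List.sum_map_add]
    refine congrArg List.sum (List.map_congr_left fun e he => ?_)
    have := (hE.1 e (List.mem_cons_of_mem _ he)).2
    omega
  simp only [_root_.dualHookCode, List.map_cons, List.map_map, List.sum_cons, List.flatMap_cons,
    List.length_append, List.length_flatMap, Function.comp_def] at hj hrest ⊢
  omega

end IsHookCode

noncomputable def lecDual (w : List ℕ) : List ℕ := ofHookCode (dualHookCode (hookCode w))

section lecDual

variable {w : List ℕ}

lemma lec_eq_sum_snd_hookCode (hw : w.Nodup) : lec w = ((hookCode w).map Prod.snd).sum := by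
  rw [← (isHookCode_hookCode hw).lec_ofHookCode, ofHookCode_hookCode hw]

lemma lecDual_perm (hw : w.Nodup) : (lecDual w).Perm w := by
  have hE := isHookCode_hookCode hw
  have h := ofHookCode_perm fun e he => (hE.dualHookCode.1 e he).2
  rw [flatMap_fst_dualHookCode] at h
  have h' := (ofHookCode_perm fun e he => (hE.1 e he).2).symm
  rw [ofHookCode_hookCode hw] at h'
  exact h.trans h'

lemma lecDual_lecDual (hw : w.Nodup) : lecDual (lecDual w) = w := by
  have hE := isHookCode_hookCode hw
  rw [lecDual, lecDual, hE.dualHookCode.hookCode_ofHookCode, hE.dualHookCode_dualHookCode,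
    ofHookCode_hookCode hw]

lemma lec_add_lec_lecDual (hw : w.Nodup) : lec w + lec (lecDual w) = w.length - 1 := by
  have hE := isHookCode_hookCode hw
  have hlen : w.length = ((hookCode w).flatMap Prod.fst).length := by
    rw [← (ofHookCode_perm fun e he => (hE.1 e he).2).length_eq, ofHookCode_hookCode hw]
  rw [lec_eq_sum_snd_hookCode hw, lecDual, hE.dualHookCode.lec_ofHookCode, hlen,
    hE.sum_snd_add_sum_snd_dualHookCode]

lemma invList_add_lec_lecDual (hw : w.Nodup) :
    invList w + lec (lecDual w) = invList (lecDual w) + lec w := by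
  have hE := isHookCode_hookCode hw
  have hinv := invList_ofHookCode hE.1
  have hinv' := invList_ofHookCode hE.dualHookCode.1
  rw [ofHookCode_hookCode hw] at hinv
  rw [flatMap_fst_dualHookCode] at hinv'
  rw [lec_eq_sum_snd_hookCode hw, lecDual, hE.dualHookCode.lec_ofHookCode, hinv, hinv']
  omega

end lecDual

theorem lec_involution_general (n : ℕ) :
    ∃ f : {w : List ℕ // w.Perm (List.range' 1 n)} →
          {w : List ℕ // w.Perm (List.range' 1 n)},
      Function.Involutive f ∧
      ∀ w, lec w.1 + lec (f w).1 = n - 1 ∧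
        invList w.1 + lec (f w).1 = invList (f w).1 + lec w.1 := by
  have hnodup {w : List ℕ} (hw : w.Perm (List.range' 1 n)) : w.Nodup :=
    hw.nodup_iff.2 List.nodup_range'
  refine ⟨fun w => ⟨lecDual w.1, (lecDual_perm (hnodup w.2)).trans w.2⟩,
    fun w => Subtype.ext (lecDual_lecDual (hnodup w.2)),
    fun w => ⟨?_, invList_add_lec_lecDual (hnodup w.2)⟩⟩
  rw [lec_add_lec_lecDual (hnodup w.2), w.2.length_eq, List.length_range']

/-- There is an involution `π ↦ σ` on the permutations of `{1,…,n}` with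
`lec(π) = n − 1 − lec(σ)` and `inv(π) − lec(π) = inv(σ) − lec(σ)`
(stated additively to avoid truncated subtraction). -/
theorem lec_involution (n : ℕ) (hn : 1 ≤ n) :
    ∃ f : {w : List ℕ // w.Perm (List.range' 1 n)} →
          {w : List ℕ // w.Perm (List.range' 1 n)},
      Function.Involutive f ∧
      ∀ w, lec w.1 + lec (f w).1 = n - 1 ∧
        invList w.1 + lec (f w).1 = invList (f w).1 + lec w.1 :=
  lec_involution_general n
end
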